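/- Let S be a seed of type (n,k) with (n,k) ≠ (4,1), and let (p_m)_{m≥0} be the inward spiral vertices generated by S. Then for every m ≥ 0, the five consecutive points p_m, p_{m+1}, p_{m+2}, p_{m+3}, p_{m+4} are in strictly convex position in this cyclic order; i.e., every five consecutive vertices of a PLC pentagram spiral are the vertices of a strictly convex pentagon. -/

import Mathlib

/-- Planar determinant (cross product) of two vectors of `ℝ²`. -/
def det2 (u v : ℝ × ℝ) : ℝ := u.1 * v.2 - u.2 * v.1

/-- Counterclockwise orientation of an ordered triple of points of `ℝ²`. -/
def ccw (a b c : ℝ × ℝ) : Prop := 0 < det2 (b - a) (c - a)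

/-- The (1-indexed) points `A 1, …, A n` are in strictly convex position in this
(counterclockwise) cyclic order: every triple taken in cyclic order is
counterclockwise. -/
def ConvexCyc (n : ℕ) (A : ℕ → ℝ × ℝ) : Prop :=
  ∀ i j l : ℕ, 1 ≤ i → i < j → j < l → l ≤ n → ccw (A i) (A j) (A l)

/-- A seed of type `(n,k)`: the points `A 1, …, A n` are in strictly convex position
in counterclockwise cyclic order, and for `j = n-k+1, …, n` the point `B j` lies in
the open segment between `A j` and `A (j+1)` (indices mod `n`, so `A (n+1) = A 1`;
note `j % n + 1` equals `j + 1` for `j < n` and equals `1` for `j = n`).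
Only the values `A 1, …, A n` and `B (n-k+1), …, B n` are relevant. -/
def IsSeed (n k : ℕ) (A B : ℕ → ℝ × ℝ) : Prop :=
  ConvexCyc n A ∧
    ∀ j : ℕ, n - k + 1 ≤ j → j ≤ n →
      ∃ t ∈ Set.Ioo (0 : ℝ) 1, B j = A j + t • (A (j % n + 1) - A j)

/-- The point `p` lies on the line through `a` and `b`. -/
def onLine (a b p : ℝ × ℝ) : Prop := det2 (b - a) (p - a) = 0

/-- The intersection point of the line through `a`, `b` with the line through
`c`, `d` (when the two lines are non-parallel). -/
noncomputable def lineInter (a b c d : ℝ × ℝ) : ℝ × ℝ :=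
  a + (det2 (c - a) (d - c) / det2 (b - a) (d - c)) • (b - a)

/-- Auxiliary descending recursion producing the points `B*`: `BstAux n A Astar d`
is the point `B*_(n-d)`.  For `d = 0`, `B*_n` is the intersection of the line
through `A 1` and `A*_2` with the line through `A*_n` and `A*_1`; descending,
`B*_j` (`j = n - d - 1`) is the intersection of the line through `A (j+1)` and
`B*_(j+1)` with the line through `A*_j` and `A*_(j+1)`. -/
noncomputable def BstAux (n : ℕ) (A Astar : ℕ → ℝ × ℝ) : ℕ → ℝ × ℝ
  | 0 => lineInter (A 1) (Astar 2) (Astar n) (Astar 1)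
  | d + 1 => lineInter (A (n - d)) (BstAux n A Astar d) (Astar (n - d - 1)) (Astar (n - d))

/-- The seed map `T_{n,k}`, sending the configuration `(A, B)` to `(A*, B*)`:
`A*_i = A_(i+1)` for `i = 1, …, n-k`; `A*_i = B_i` for `i = n-k+1, …, n`; and the
points `B*_j`, `j = n, n-1, …, n-k+1`, are produced by the descending intersection
recursion `BstAux`. -/
noncomputable def seedMap (n k : ℕ) (S : (ℕ → ℝ × ℝ) × (ℕ → ℝ × ℝ)) :
    (ℕ → ℝ × ℝ) × (ℕ → ℝ × ℝ) :=
  let Astar : ℕ → ℝ × ℝ := fun i => if i ≤ n - k then S.1 (i + 1) else S.2 i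
  (Astar, fun j => BstAux n S.1 Astar (n - j))

/-- Points `w 0, …, w (N-1)` are in strictly convex position in this
(counterclockwise) cyclic order: every ordered triple is counterclockwise. -/
def StrictlyConvexCCW {N : ℕ} (w : Fin N → ℝ × ℝ) : Prop :=
  ∀ i j k : Fin N, i < j → j < k → ccw (w i) (w j) (w k)


/-!
Replacing the vertex `w i` of a strictly convex polygon by a point of the half-open edge
`(w (i-1), w i]` keeps the polygon strictly convex: every orientation determinant through the new
point is a combination, with positive weight on the old one, of two orientation determinants of
the old polygon. Doing this from the last vertex downwards, the vertices `A*` of `T S` are such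
cuts of the rotated polygon `A 2, …, A n, A 1`. The same cuts of the four vertices
`A j, …, A (j+3)` show that `B j, A (j+1), B (j+1), B* (j+1)` are in strictly convex position, so
the line through `A (j+1)` and `B* (j+1)` separates `B j` from `B (j+1)` and `B* j` lies strictly
between them. Hence `T` maps seeds to seeds.

For the spiral, the points `p 0, …, p (r-1)` followed by the vertices of `T^r S` are turned by the
same cuts into the corresponding chain for `r + 1`. Starting from `A`, these chains are strictly
convex with `n` points; when `k ≥ 2`, starting from `A 1, A* 1, …, A* n` (the polygon `A` with the
corner `A n` cut off by `B (n-1) B n`), they have `n + 1` points. As `(n, k) ≠ (4, 1)`, one of the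
two gives five points `p 0, …, p 4`.
-/

def orient (a b c : ℝ × ℝ) : ℝ := det2 (b - a) (c - a)

lemma ccw_iff_orient_pos {a b c : ℝ × ℝ} : ccw a b c ↔ 0 < orient a b c := Iff.rfl

lemma orient_rotate (a b c : ℝ × ℝ) : orient a b c = orient b c a := by
  simp only [orient, det2, Prod.fst_sub, Prod.snd_sub]; ring

lemma orient_swap (a b c : ℝ × ℝ) : orient a c b = -orient a b c := by
  simp only [orient, det2, Prod.fst_sub, Prod.snd_sub]; ring

@[simp] lemma orient_self_left (a c : ℝ × ℝ) : orient a a c = 0 := by simp [orient, det2]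

@[simp] lemma orient_self_right (a b : ℝ × ℝ) : orient a b b = 0 := by
  simp only [orient, det2]; ring

@[simp] lemma orient_self_mid (a b : ℝ × ℝ) : orient a b a = 0 := by simp [orient, det2]

lemma orient_add_smul {a b u v : ℝ × ℝ} {α β : ℝ} (h : α + β = 1) :
    orient a b (α • u + β • v) = α * orient a b u + β * orient a b v := by
  simp only [orient, det2, Prod.fst_sub, Prod.snd_sub, Prod.fst_add, Prod.snd_add,
    Prod.smul_fst, Prod.smul_snd, smul_eq_mul]
  linear_combination (a.2 * (b.1 - a.1) - a.1 * (b.2 - a.2)) * h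

lemma orient_nonneg_of_mem_openSegment {a b u v p : ℝ × ℝ} (hp : p ∈ openSegment ℝ u v)
    (hu : 0 ≤ orient a b u) (hv : 0 ≤ orient a b v) : 0 ≤ orient a b p := by
  obtain ⟨α, β, hα, hβ, hαβ, rfl⟩ := hp
  rw [orient_add_smul hαβ]
  positivity

lemma orient_pos_of_mem_openSegment {a b u v p : ℝ × ℝ} (hp : p ∈ openSegment ℝ u v)
    (hu : 0 ≤ orient a b u) (hv : 0 < orient a b v) : 0 < orient a b p := by
  obtain ⟨α, β, hα, hβ, hαβ, rfl⟩ := hp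
  rw [orient_add_smul hαβ]
  positivity

lemma orient_pos_of_mem_insert_openSegment {a b u v p : ℝ × ℝ}
    (hp : p ∈ insert v (openSegment ℝ u v)) (hu : 0 ≤ orient a b u) (hv : 0 < orient a b v) :
    0 < orient a b p := by
  obtain rfl | hp := hp
  exacts [hv, orient_pos_of_mem_openSegment hp hu hv]

lemma lineInter_mem_openSegment {a b c d : ℝ × ℝ} (hc : 0 < orient a b c)
    (hd : orient a b d < 0) : lineInter a b c d ∈ openSegment ℝ c d := by
  set D := orient a b c - orient a b d with hD
  have hDpos : 0 < D := by linarith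
  refine ⟨-orient a b d / D, orient a b c / D, div_pos (by linarith) hDpos, div_pos hc hDpos,
    by field_simp; ring, ?_⟩
  have hdet : det2 (b - a) (d - c) = -D := by
    simp only [hD, orient, det2, Prod.fst_sub, Prod.snd_sub]; ring
  rw [lineInter, hdet]
  ext <;> simp only [Prod.fst_add, Prod.snd_add, Prod.smul_fst, Prod.smul_snd, smul_eq_mul,
    Prod.fst_sub, Prod.snd_sub] <;> field_simp <;> simp only [hD, orient, det2, Prod.fst_sub,
    Prod.snd_sub] <;> ring

namespace ConvexCyc

variable {N : ℕ} {w v : ℕ → ℝ × ℝ}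

lemma orient_pos (hw : ConvexCyc N w) {i j l : ℕ} (hi : 1 ≤ i) (hij : i < j) (hjl : j < l)
    (hl : l ≤ N) : 0 < orient (w i) (w j) (w l) :=
  hw i j l hi hij hjl hl

lemma orient_nonneg (hw : ConvexCyc N w) {i j l : ℕ} (hi : 1 ≤ i) (hij : i ≤ j) (hjl : j ≤ l)
    (hl : l ≤ N) : 0 ≤ orient (w i) (w j) (w l) := by
  rcases hij.eq_or_lt with rfl | hij
  · simp
  rcases hjl.eq_or_lt with rfl | hjl
  · simp
  exact (hw.orient_pos hi hij hjl hl).le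

lemma congr (hw : ConvexCyc N w) (h : ∀ i, 1 ≤ i → i ≤ N → v i = w i) : ConvexCyc N v := by
  intro i j l hi hij hjl hl
  rw [h i hi (by omega), h j (by omega) (by omega), h l (by omega) hl]
  exact hw i j l hi hij hjl hl

lemma mono (hw : ConvexCyc N w) {M : ℕ} (hM : M ≤ N) : ConvexCyc M w :=
  fun i j l hi hij hjl hl => hw i j l hi hij hjl (hl.trans hM)

lemma comp_succ_mod (hw : ConvexCyc N w) : ConvexCyc N (w ∘ fun i => i % N + 1) := by
  intro i j l hi hij hjl hl
  simp only [Function.comp_apply, Nat.mod_eq_of_lt (show i < N by omega),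
    Nat.mod_eq_of_lt (show j < N by omega)]
  rcases hl.lt_or_eq with hl | rfl
  · rw [Nat.mod_eq_of_lt hl]
    exact hw.orient_pos (by omega) (by omega) (by omega) (by omega)
  · rw [Nat.mod_self, ccw_iff_orient_pos, orient_rotate, orient_rotate]
    exact hw.orient_pos le_rfl (by omega) (by omega) (by omega)

lemma comp_iterate_succ_mod (hw : ConvexCyc N w) (s : ℕ) :
    ConvexCyc N (w ∘ (fun i => i % N + 1)^[s]) := by
  induction s with
  | zero => exact hw
  | succ s ih => rw [Function.iterate_succ]; exact ih.comp_succ_mod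

lemma update {m m' : ℕ} (hw : ConvexCyc N w) (hm : 1 ≤ m) (hmN : m ≤ N) (hm' : 1 ≤ m')
    (hm'N : m' ≤ N) (hadj : m' + 1 = m ∨ m + 1 = m') {p : ℝ × ℝ}
    (hp : p ∈ insert (w m) (openSegment ℝ (w m') (w m))) :
    ConvexCyc N (Function.update w m p) := by
  intro a b c ha hab hbc hc
  rw [ccw_iff_orient_pos]
  by_cases hcm : c = m
  · subst hcm
    rw [Function.update_self, Function.update_of_ne (by omega), Function.update_of_ne (by omega)]
    exact orient_pos_of_mem_insert_openSegment hp
      (hw.orient_nonneg ha hab.le (by omega) hm'N) (hw.orient_pos ha hab hbc hc)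
  by_cases hbm : b = m
  · subst hbm
    rw [Function.update_self, Function.update_of_ne (by omega), Function.update_of_ne hcm,
      orient_rotate, orient_rotate]
    refine orient_pos_of_mem_insert_openSegment hp ?_ ?_ <;> rw [← orient_rotate, ← orient_rotate]
    exacts [hw.orient_nonneg ha (by omega) (by omega) hc, hw.orient_pos ha hab hbc hc]
  by_cases ham : a = m
  · subst ham
    rw [Function.update_self, Function.update_of_ne hbm, Function.update_of_ne hcm,
      orient_rotate]
    refine orient_pos_of_mem_insert_openSegment hp ?_ ?_ <;> rw [← orient_rotate]
    exacts [hw.orient_nonneg hm' (by omega) hbc.le hc, hw.orient_pos ha hab hbc hc]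
  rw [Function.update_of_ne ham, Function.update_of_ne hbm, Function.update_of_ne hcm]
  exact hw a b c ha hab hbc hc

lemma of_mem_insert_openSegment (hw : ConvexCyc N w) (h1 : v 1 = w 1)
    (hv : ∀ i, 2 ≤ i → i ≤ N → v i ∈ insert (w i) (openSegment ℝ (w (i - 1)) (w i))) :
    ConvexCyc N v := by
  -- Replacing from the last vertex downwards, each new point is cut toward a vertex still in place.
  have key : ∀ s, s < N → ConvexCyc N (fun i => if i + s ≤ N then w i else v i) := by
    intro s
    induction s with
    | zero => intro _; exact hw.congr fun i _ hi => if_pos (by omega)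
    | succ s ih =>
      intro hs
      refine ((ih (by omega)).update (m := N - s) (m' := N - s - 1) (p := v (N - s)) (by omega)
        (by omega) (by omega) (by omega) (by omega) ?_).congr fun i _ _ => ?_
      · simp only [if_pos (show N - s + s ≤ N by omega), if_pos (show N - s - 1 + s ≤ N by omega)]
        exact hv _ (by omega) (by omega)
      · rcases eq_or_ne i (N - s) with rfl | hi
        · simp [show ¬ N - s + (s + 1) ≤ N by omega]
        · simp only [Function.update_of_ne hi]
          split_ifs <;> first | rfl | omega
  rcases Nat.eq_zero_or_pos N with rfl | hN
  · intro i j l; omega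
  refine (key (N - 1) (by omega)).congr fun i hi _ => ?_
  rcases hi.eq_or_lt with rfl | hi
  · simp [h1]
  · simp [show ¬ i + (N - 1) ≤ N by omega]

lemma cutCorner (hw : ConvexCyc N w) (hN : 3 ≤ N) {q q' : ℝ × ℝ}
    (hq : q ∈ openSegment ℝ (w (N - 1)) (w N)) (hq' : q' ∈ openSegment ℝ (w N) (w 1)) :
    ConvexCyc (N + 1) (fun i => if i < N then w i else if i = N then q else q') := by
  intro a b c ha hab hbc hc
  rw [ccw_iff_orient_pos]
  rcases lt_trichotomy c N with hcN | rfl | hcN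
  · simp only [if_pos (hab.trans (hbc.trans hcN)), if_pos (hbc.trans hcN), if_pos hcN]
    exact hw.orient_pos ha hab hbc hcN.le
  · simp only [if_pos (hab.trans hbc), if_pos hbc, lt_irrefl, if_false, if_true]
    exact orient_pos_of_mem_openSegment hq (hw.orient_nonneg ha hab.le (by omega) (by omega))
      (hw.orient_pos ha hab hbc le_rfl)
  obtain rfl : c = N + 1 := by omega
  simp only [show ¬ N + 1 < N by omega, show N + 1 ≠ N by omega, if_false]
  rcases (show b < N ∨ b = N by omega) with hbN | rfl
  · simp only [if_pos (show b < N by omega), if_pos (show a < N by omega)]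
    rw [openSegment_symm] at hq'
    refine orient_pos_of_mem_openSegment hq' ?_ (hw.orient_pos ha hab (by omega) le_rfl)
    rw [← orient_rotate]
    exact hw.orient_nonneg le_rfl ha hab.le (by omega)
  simp only [if_pos hab, lt_irrefl, if_true, if_false]
  rcases ha.eq_or_lt with rfl | ha
  · rw [openSegment_symm] at hq' hq
    refine orient_pos_of_mem_openSegment hq' (by simp) ?_
    rw [orient_rotate, orient_rotate]
    refine orient_pos_of_mem_openSegment hq (by simp) ?_
    rw [orient_rotate]
    exact hw.orient_pos le_rfl (by omega) (by omega) le_rfl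
  · refine orient_pos_of_mem_openSegment hq' ?_ ?_ <;> rw [orient_rotate, orient_rotate]
    · refine orient_nonneg_of_mem_openSegment hq ?_ (by simp)
      rw [orient_rotate]
      exact hw.orient_nonneg (by omega) (by omega) (by omega) le_rfl
    · exact orient_pos_of_mem_openSegment hq (hw.orient_nonneg le_rfl (by omega) (by omega)
        (by omega)) (hw.orient_pos le_rfl ha hab le_rfl)

end ConvexCyc

lemma StrictlyConvexCCW.of_convexCyc {N : ℕ} {v : ℕ → ℝ × ℝ} (hv : ConvexCyc N v) :
    StrictlyConvexCCW (fun i : Fin N => v (i + 1)) :=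
  fun i j l hij hjl => hv _ _ _ (by omega) (by omega) (by omega) (by omega)

open Function in
lemma lineInter_mem_openSegment_of_convexCyc_four {Q : ℕ → ℝ × ℝ} (hQ : ConvexCyc 4 Q)
    {c e x W : ℝ × ℝ} (hc : c ∈ openSegment ℝ (Q 1) (Q 2))
    (he : e ∈ insert (Q 3) (openSegment ℝ (Q 2) (Q 3)))
    (hx : x ∈ insert (Q 4) (openSegment ℝ (Q 3) (Q 4))) (hW : W ∈ insert x (openSegment ℝ e x)) :
    lineInter (Q 2) W c e ∈ openSegment ℝ c e := by
  have hcW : ConvexCyc 4 (update (update (update (update Q 4 x) 3 e) 4 W) 1 c) := by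
    refine (((hQ.update (m := 4) (m' := 3) ?_ ?_ ?_ ?_ ?_ hx).update (m := 3) (m' := 2) ?_ ?_ ?_ ?_
      ?_ ?_).update (m := 4) (m' := 3) ?_ ?_ ?_ ?_ ?_ ?_).update (m := 1) (m' := 2) ?_ ?_ ?_ ?_
      ?_ ?_ <;> try norm_num
    · simpa only [Set.mem_insert_iff] using he
    · simpa only [Set.mem_insert_iff] using hW
    · simpa only [openSegment_symm] using Or.inr hc
  have h124 := hcW.orient_pos (i := 1) (j := 2) (l := 4) le_rfl one_lt_two (by norm_num) le_rfl
  have h234 := hcW.orient_pos (i := 2) (j := 3) (l := 4) one_le_two (by norm_num) (by norm_num)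
    le_rfl
  simp only [update_apply, OfNat.ofNat_ne_one, Nat.reduceEqDiff, if_true, if_false] at h124 h234
  apply lineInter_mem_openSegment
  · rwa [← orient_rotate]
  · rw [orient_swap]; linarith

lemma iterate_succ_mod_one {n m : ℕ} (hm : m < n) : (fun i => i % n + 1)^[m] 1 = m + 1 := by
  induction m with
  | zero => rfl
  | succ m ih => rw [Function.iterate_succ_apply', ih (by omega), Nat.mod_eq_of_lt hm]

lemma isSeed_iff {n k : ℕ} {A B : ℕ → ℝ × ℝ} : IsSeed n k A B ↔ ConvexCyc n A ∧
    ∀ j, n - k + 1 ≤ j → j ≤ n → B j ∈ openSegment ℝ (A j) (A (j % n + 1)) := by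
  simp only [IsSeed, openSegment_eq_image', Set.mem_image, eq_comm]

section Seed

variable {n k : ℕ} {S : (ℕ → ℝ × ℝ) × (ℕ → ℝ × ℝ)}

lemma seedMap_fst_apply (i : ℕ) :
    (seedMap n k S).1 i = if i ≤ n - k then S.1 (i + 1) else S.2 i := rfl

namespace IsSeed

lemma seedMap_fst_mem_openSegment (hS : IsSeed n k S.1 S.2) {i : ℕ} (hi : n - k < i)
    (hin : i ≤ n) : (seedMap n k S).1 i ∈ openSegment ℝ (S.1 i) (S.1 (i % n + 1)) := by
  rw [seedMap_fst_apply, if_neg (by omega)]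
  exact (isSeed_iff.1 hS).2 i (by omega) hin

lemma seedMap_fst_mem (hS : IsSeed n k S.1 S.2) (hk : 1 ≤ k) {i : ℕ} (hi : 1 ≤ i) (hin : i ≤ n) :
    (seedMap n k S).1 i ∈ insert (S.1 (i % n + 1)) (openSegment ℝ (S.1 i) (S.1 (i % n + 1))) := by
  by_cases hik : i ≤ n - k
  · rw [seedMap_fst_apply, if_pos hik, Nat.mod_eq_of_lt (by omega)]
    exact Set.mem_insert _ _
  · exact Or.inr (hS.seedMap_fst_mem_openSegment (by omega) hin)

lemma convexCyc_seedMap_fst (hS : IsSeed n k S.1 S.2) (hk1 : 1 ≤ k) (hkn : k ≤ n - 1) :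
    ConvexCyc n (seedMap n k S).1 := by
  refine hS.1.comp_succ_mod.of_mem_insert_openSegment ?_ fun i hi hin => ?_
  · rw [seedMap_fst_apply, if_pos (by omega), Function.comp_apply, Nat.mod_eq_of_lt (by omega)]
  · simp only [Function.comp_apply, Nat.mod_eq_of_lt (show i - 1 < n by omega),
      Nat.sub_add_cancel (show 1 ≤ i by omega)]
    exact hS.seedMap_fst_mem hk1 (by omega) hin

lemma lineInter_mem_openSegment (hS : IsSeed n k S.1 S.2) (hn : 4 ≤ n) (hk1 : 1 ≤ k) {j : ℕ}
    (hj : n - k < j) (hjn : j ≤ n) {W : ℝ × ℝ}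
    (hW : W ∈ insert ((seedMap n k S).1 ((j % n + 1) % n + 1))
      (openSegment ℝ ((seedMap n k S).1 (j % n + 1)) ((seedMap n k S).1 ((j % n + 1) % n + 1)))) :
    lineInter (S.1 (j % n + 1)) W ((seedMap n k S).1 j) ((seedMap n k S).1 (j % n + 1)) ∈
      openSegment ℝ ((seedMap n k S).1 j) ((seedMap n k S).1 (j % n + 1)) := by
  set σ : ℕ → ℕ := fun i => i % n + 1
  have hσn : ∀ i, σ i ≤ n := fun i => Nat.mod_lt i (by omega)
  have hQ : ConvexCyc 4 (S.1 ∘ σ^[j - 1]) := (hS.1.comp_iterate_succ_mod (j - 1)).mono hn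
  have hQ1 : σ^[j - 1] 1 = j := by rw [iterate_succ_mod_one (by omega)]; omega
  have hQsucc : ∀ i, i < n → σ^[j - 1] (i + 1) = σ (σ^[j - 1] i) := fun i hi => by
    rw [← (Function.Commute.iterate_self σ (j - 1)).eq]
    simp only [σ, Nat.mod_eq_of_lt hi]
  have hQ2 : σ^[j - 1] 2 = σ j := by rw [hQsucc 1 (by omega), hQ1]
  have hQ3 : σ^[j - 1] 3 = σ (σ j) := by rw [hQsucc 2 (by omega), hQ2]
  have hQ4 : σ^[j - 1] 4 = σ (σ (σ j)) := by rw [hQsucc 3 (by omega), hQ3]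
  rw [show S.1 (σ j) = (S.1 ∘ σ^[j - 1]) 2 by simp only [Function.comp_apply, hQ2]]
  refine lineInter_mem_openSegment_of_convexCyc_four hQ (x := (seedMap n k S).1 (σ (σ j)))
    ?_ ?_ ?_ hW <;> simp only [Function.comp_apply, hQ1, hQ2, hQ3, hQ4]
  · exact hS.seedMap_fst_mem_openSegment hj hjn
  · exact hS.seedMap_fst_mem hk1 (Nat.le_add_left _ _) (hσn _)
  · exact hS.seedMap_fst_mem hk1 (Nat.le_add_left _ _) (hσn _)

lemma seedMap_snd_mem (hS : IsSeed n k S.1 S.2) (hn : 4 ≤ n) (hk1 : 1 ≤ k) {j : ℕ}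
    (hj : n - k < j) (hjn : j ≤ n) :
    (seedMap n k S).2 j ∈ openSegment ℝ ((seedMap n k S).1 j) ((seedMap n k S).1 (j % n + 1)) := by
  suffices h : ∀ d, n - k < n - d → BstAux n S.1 (seedMap n k S).1 d ∈ openSegment ℝ
      ((seedMap n k S).1 (n - d)) ((seedMap n k S).1 ((n - d) % n + 1)) by
    have := h (n - j) (by omega)
    rwa [show n - (n - j) = j by omega] at this
  intro d
  induction d with
  | zero =>
    intro _
    have := hS.lineInter_mem_openSegment hn hk1 (j := n) (by omega) le_rfl (Set.mem_insert _ _)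
    simpa [BstAux, Nat.mod_self, Nat.mod_eq_of_lt (show 1 < n by omega)] using this
  | succ d ih =>
    intro hd
    have h := hS.lineInter_mem_openSegment hn hk1 (j := n - d - 1) (by omega) (by omega)
      (W := BstAux n S.1 (seedMap n k S).1 d)
    rw [Nat.mod_eq_of_lt (show n - d - 1 < n by omega), show n - d - 1 + 1 = n - d by omega] at h
    rw [BstAux, show n - (d + 1) = n - d - 1 by omega,
      Nat.mod_eq_of_lt (show n - d - 1 < n by omega), show n - d - 1 + 1 = n - d by omega]
    exact h (Or.inr (ih (by omega)))

end IsSeed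

lemma isSeed_seedMap (hS : IsSeed n k S.1 S.2) (hn : 4 ≤ n) (hk1 : 1 ≤ k) (hkn : k ≤ n - 1) :
    IsSeed n k (seedMap n k S).1 (seedMap n k S).2 :=
  isSeed_iff.2 ⟨hS.convexCyc_seedMap_fst hk1 hkn,
    fun _ hj hjn => hS.seedMap_snd_mem hn hk1 (by omega) hjn⟩

lemma isSeed_iterate_seedMap (hS : IsSeed n k S.1 S.2) (hn : 4 ≤ n) (hk1 : 1 ≤ k)
    (hkn : k ≤ n - 1) (m : ℕ) : IsSeed n k ((seedMap n k)^[m] S).1 ((seedMap n k)^[m] S).2 := by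
  induction m with
  | zero => exact hS
  | succ m ih => rw [Function.iterate_succ_apply']; exact isSeed_seedMap ih hn hk1 hkn

end Seed

noncomputable def spiralChain (n k : ℕ) (S : (ℕ → ℝ × ℝ) × (ℕ → ℝ × ℝ)) (r : ℕ) (i : ℕ) : ℝ × ℝ :=
  if i ≤ r then ((seedMap n k)^[i - 1] S).1 1 else ((seedMap n k)^[r] S).1 (i - r)

section Spiral

variable {n k : ℕ} {S : (ℕ → ℝ × ℝ) × (ℕ → ℝ × ℝ)}

lemma spiralChain_of_le {r i : ℕ} (hi : 1 ≤ i) (hir : i ≤ r + 1) :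
    spiralChain n k S r i = ((seedMap n k)^[i - 1] S).1 1 := by
  unfold spiralChain
  split_ifs
  · rfl
  · rw [show i - r = 1 by omega, show i - 1 = r by omega]

lemma convexCyc_spiralChain_zero (hS : IsSeed n k S.1 S.2) :
    ConvexCyc n (spiralChain n k S 0) :=
  hS.1.congr fun i hi _ => by simp [spiralChain, show ¬ i ≤ 0 by omega]

lemma convexCyc_spiralChain_one (hS : IsSeed n k S.1 S.2) (hn : 3 ≤ n) (hk2 : 2 ≤ k) :
    ConvexCyc (n + 1) (spiralChain n k S 1) := by
  have hmod : ∀ i, i < n → i % n + 1 = i + 1 := fun i hi => by rw [Nat.mod_eq_of_lt hi]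
  have hq := hS.seedMap_fst_mem_openSegment (i := n - 1) (by omega) (by omega)
  have hq' := hS.seedMap_fst_mem_openSegment (i := n) (by omega) le_rfl
  rw [hmod _ (by omega), Nat.sub_add_cancel (by omega)] at hq
  rw [Nat.mod_self, zero_add] at hq'
  refine (hS.1.cutCorner hn hq hq').of_mem_insert_openSegment ?_ fun i hi hin => ?_
  · simp [spiralChain, show 1 < n by omega]
  have hchain : spiralChain n k S 1 i = (seedMap n k S).1 (i - 1) := by
    simp [spiralChain, show ¬ i ≤ 1 by omega]
  rw [hchain]
  rcases (show i < n ∨ i = n ∨ i = n + 1 by omega) with hlt | heq | heq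
  · simp only [if_pos hlt, if_pos (show i - 1 < n by omega)]
    have := hS.seedMap_fst_mem (by omega) (i := i - 1) (by omega) (by omega)
    rwa [hmod _ (by omega), Nat.sub_add_cancel (by omega)] at this
  · simp [heq]
  · simp [heq]

lemma convexCyc_spiralChain_succ (hS : IsSeed n k S.1 S.2) (hn : 4 ≤ n) (hk1 : 1 ≤ k)
    (hkn : k ≤ n - 1) {N r : ℕ} (hN : N ≤ n + r) (h : ConvexCyc N (spiralChain n k S r)) :
    ConvexCyc N (spiralChain n k S (r + 1)) := by
  refine h.of_mem_insert_openSegment ?_ fun i hi hin => ?_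
  · rw [spiralChain_of_le le_rfl (by omega), spiralChain_of_le le_rfl (by omega)]
  by_cases hir : i ≤ r + 1
  · rw [spiralChain_of_le (r := r + 1) (by omega) (by omega),
      spiralChain_of_le (r := r) (by omega) hir]
    exact Set.mem_insert _ _
  have hSr := isSeed_iterate_seedMap hS hn hk1 hkn r
  have := hSr.seedMap_fst_mem hk1 (i := i - (r + 1)) (by omega) (by omega)
  rw [Nat.mod_eq_of_lt (by omega), show i - (r + 1) + 1 = i - r by omega,
    show i - (r + 1) = i - 1 - r by omega] at this
  simp only [spiralChain, if_neg hir, if_neg (show ¬ i ≤ r by omega),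
    if_neg (show ¬ i - 1 ≤ r by omega), Function.iterate_succ_apply']
  rwa [show i - (r + 1) = i - 1 - r by omega]

lemma convexCyc_spiralChain_add (hS : IsSeed n k S.1 S.2) (hn : 4 ≤ n) (hk1 : 1 ≤ k)
    (hkn : k ≤ n - 1) {N r : ℕ} (hN : N ≤ n + r) (h : ConvexCyc N (spiralChain n k S r))
    (s : ℕ) : ConvexCyc N (spiralChain n k S (r + s)) := by
  induction s with
  | zero => exact h
  | succ s ih => exact convexCyc_spiralChain_succ hS hn hk1 hkn (r := r + s) (by omega) ih

end Spiral

/-- **Every five consecutive vertices of a PLC pentagram spiral are the vertices of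
a strictly convex pentagon.**  Let `S = (A,B)` be a seed of type `(n,k)` with
`(n,k) ≠ (4,1)` and let `p m = A_1(T_{n,k}^m(S))` be the inward spiral vertices.
Then for every `m`, the five consecutive points `p m, …, p (m+4)` are in strictly
convex position in this cyclic order. -/
theorem five_consecutive_convex (n k : ℕ) (hn : 4 ≤ n) (hk1 : 1 ≤ k) (hkn : k ≤ n - 1)
    (hne : ¬(n = 4 ∧ k = 1)) (A B : ℕ → ℝ × ℝ) (hS : IsSeed n k A B) :
    ∀ m : ℕ,
      StrictlyConvexCCW (fun i : Fin 5 => ((seedMap n k)^[m + (i : ℕ)] (A, B)).1 1) := by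
  intro m
  have hSm := isSeed_iterate_seedMap (S := (A, B)) hS hn hk1 hkn m
  have hchain : ConvexCyc 5 (spiralChain n k ((seedMap n k)^[m] (A, B)) 4) := by
    rcases (show k = 1 ∨ 2 ≤ k by omega) with rfl | hk2
    · exact (convexCyc_spiralChain_add hSm hn hk1 hkn le_rfl
        (convexCyc_spiralChain_zero hSm) 4).mono (by omega)
    · exact (convexCyc_spiralChain_add hSm hn hk1 hkn le_rfl
        (convexCyc_spiralChain_one hSm (by omega) hk2) 3).mono (by omega)
  convert StrictlyConvexCCW.of_convexCyc hchain using 2 with i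
  rw [spiralChain_of_le (by omega) (by omega), Nat.add_sub_cancel, ← Function.iterate_add_apply,
    add_comm]
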